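/- For the Nesterov operator G = [[0, A], [-βI, (1+β)A]] with A symmetric, 0 ≺ A ≺ I with largest eigenvalue λ_n = 1 - μ/L and β = (√L - √μ)/(√L + √μ), the maximum real value of the numerical range is re(G) = (1/2)( (1+β)λ_n + sqrt( λ_n²(1+β)² + (λ_n - β)² ) ). -/

import Mathlib

/-!
Conjugating by the unitary `fromBlocks U 0 0 U`, where `A = U D Uᴴ`, turns `G` into the block
matrix with diagonal blocks `0, D, -β, (1 + β) D`, i.e. (up to a permutation of the basis) the
direct sum of the real `2 × 2` matrices `G_j = !![0, λ_j; -β, (1 + β) λ_j]`. The real part of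
`x* G x` then splits over `j`, and the `j`-th summand is at most the rightmost point of `W(G_j)`
times the mass of `x` on the `j`-th pair of coordinates; this bound is attained by a real unit
vector supported on one pair. For `β ≥ 0` the rightmost point of `W(G_j)` increases with
`λ_j ≥ 0`, so the maximum is attained at `λ_n`.
-/

open Matrix

/-- The numerical range `W(G) = { x* G x : ‖x‖₂ = 1 }` of a complex matrix. -/
noncomputable def numericalRange {n : Type*} [Fintype n] (G : Matrix n n ℂ) : Set ℂ :=
  {z | ∃ x : EuclideanSpace ℂ n, ‖x‖ = 1 ∧ z = star (x : n → ℂ) ⬝ᵥ G.mulVec x}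

/-- The rightmost point of the numerical range of the real matrix `!![a, b; c, d]`, i.e. the
largest eigenvalue of its symmetric part. -/
noncomputable def rightmostRe (a b c d : ℝ) : ℝ :=
  (a + d + √((a - d) ^ 2 + (b + c) ^ 2)) / 2

lemma quadForm_le_rightmostRe_mul (a b c d s t : ℝ) :
    a * s ^ 2 + (b + c) * s * t + d * t ^ 2 ≤ rightmostRe a b c d * (s ^ 2 + t ^ 2) := by
  set r := √((a - d) ^ 2 + (b + c) ^ 2) with hr
  have hr0 : 0 ≤ r := Real.sqrt_nonneg _
  have hr2 : r ^ 2 = (a - d) ^ 2 + (b + c) ^ 2 := Real.sq_sqrt (by positivity)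
  rw [rightmostRe, ← hr]
  rcases hr0.eq_or_lt with h | h
  · have hbc : b + c = 0 := by nlinarith
    have had : a = d := by nlinarith
    subst had
    rw [hbc, ← h]
    nlinarith
  · -- `r` times the difference of the two sides is a sum of two squares
    nlinarith [sq_nonneg ((r + d - a) * s - (b + c) * t),
      sq_nonneg ((r + a - d) * t - (b + c) * s)]

lemma exists_quadForm_eq_rightmostRe (a b c d : ℝ) :
    ∃ s t : ℝ, s ^ 2 + t ^ 2 = 1 ∧
      a * s ^ 2 + (b + c) * s * t + d * t ^ 2 = rightmostRe a b c d := by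
  set r := √((a - d) ^ 2 + (b + c) ^ 2)
  have hr0 : 0 ≤ r := Real.sqrt_nonneg _
  have hr2 : r ^ 2 = (a - d) ^ 2 + (b + c) ^ 2 := Real.sq_sqrt (by positivity)
  have hρ : rightmostRe a b c d = (a + d + r) / 2 := rfl
  rcases (show 0 ≤ r + d - a by nlinarith).eq_or_lt with h | h
  · exact ⟨1, 0, by norm_num, by rw [hρ]; linarith⟩
  · -- `(b + c, r + d - a)` is an eigenvector of the symmetric part for `rightmostRe a b c d`
    set N := √((b + c) ^ 2 + (r + d - a) ^ 2)
    have hN : 0 < N := Real.sqrt_pos.mpr (by positivity)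
    have hN2 : N ^ 2 = (b + c) ^ 2 + (r + d - a) ^ 2 := Real.sq_sqrt (by positivity)
    refine ⟨(b + c) / N, (r + d - a) / N, ?_, ?_⟩
    · field_simp
      linarith
    · rw [hρ]
      field_simp
      rw [hN2]
      linear_combination (a - r - d) * hr2

lemma re_form_le_rightmostRe_mul (a b c d : ℝ) (s t : ℂ) :
    (star s * (a * s + b * t) + star t * (c * s + d * t)).re ≤
      rightmostRe a b c d * (Complex.normSq s + Complex.normSq t) := by
  -- the form is the sum of the real forms at the real parts and at the imaginary parts
  have hre := quadForm_le_rightmostRe_mul a b c d s.re t.re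
  have him := quadForm_le_rightmostRe_mul a b c d s.im t.im
  simp only [Complex.add_re, Complex.mul_re, Complex.star_def, Complex.conj_re, Complex.conj_im,
    Complex.ofReal_re, Complex.ofReal_im, Complex.add_im, Complex.mul_im, Complex.normSq_apply]
  nlinarith

lemma monotoneOn_rightmostRe_nesterov {β : ℝ} (hβ : 0 ≤ β) :
    MonotoneOn (fun l => rightmostRe 0 l (-β) ((1 + β) * l)) (Set.Ici 0) := by
  intro l₁ hl₁ l₂ _ hl
  rw [Set.mem_Ici] at hl₁
  simp only [rightmostRe]
  set r₁ := √((0 - (1 + β) * l₁) ^ 2 + (l₁ + -β) ^ 2)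
  set r₂ := √((0 - (1 + β) * l₂) ^ 2 + (l₂ + -β) ^ 2)
  have hr₁ : r₁ ^ 2 = ((1 + β) * l₁) ^ 2 + (l₁ - β) ^ 2 := by
    rw [Real.sq_sqrt (by positivity)]; ring
  have hr₂ : r₂ ^ 2 = ((1 + β) * l₂) ^ 2 + (l₂ - β) ^ 2 := by
    rw [Real.sq_sqrt (by positivity)]; ring
  have hr₂0 : 0 ≤ r₂ := Real.sqrt_nonneg _
  have hβr₂ : β - l₂ ≤ r₂ := by
    have := Real.abs_le_sqrt (x := l₂ - β) (y := (0 - (1 + β) * l₂) ^ 2 + (l₂ + -β) ^ 2)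
      (by nlinarith)
    linarith [neg_abs_le (l₂ - β)]
  have hδ : 0 ≤ l₂ - l₁ := by linarith
  have : r₁ ≤ (1 + β) * (l₂ - l₁) + r₂ := by
    refine Real.sqrt_le_iff.mpr ⟨by nlinarith, ?_⟩
    nlinarith [mul_le_mul_of_nonneg_left hβr₂ (by positivity : 0 ≤ 2 * (1 + β) * (l₂ - l₁)),
      mul_nonneg hδ (by nlinarith [mul_nonneg hβ (hl₁.trans hl)] :
        0 ≤ 2 * β ^ 2 + 2 * (1 + β) * β * l₂ + l₁ + l₂)]
  linarith

section NumericalRange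

variable {m : Type*} [Fintype m]

lemma mem_numericalRange_iff {G : Matrix m m ℂ} {z : ℂ} :
    z ∈ numericalRange G ↔ ∃ x : m → ℂ, star x ⬝ᵥ x = 1 ∧ z = star x ⬝ᵥ G *ᵥ x := by
  have hnorm (x : EuclideanSpace ℂ m) : ‖x‖ = 1 ↔ star (x : m → ℂ) ⬝ᵥ x = 1 := by
    rw [dotProduct_comm, ← EuclideanSpace.inner_eq_star_dotProduct, inner_self_eq_norm_sq_to_K,
      ← RCLike.ofReal_pow, ← RCLike.ofReal_one (K := ℂ), RCLike.ofReal_inj,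
      pow_eq_one_iff_of_nonneg (norm_nonneg x) two_ne_zero]
  constructor
  · rintro ⟨x, hx, rfl⟩
    exact ⟨x, (hnorm x).mp hx, rfl⟩
  · rintro ⟨x, hx, rfl⟩
    exact ⟨WithLp.toLp 2 x, (hnorm _).mpr hx, rfl⟩

lemma re_star_dotProduct_self_sum (x : m ⊕ m → ℂ) :
    (star x ⬝ᵥ x).re = ∑ i, (Complex.normSq (x (.inl i)) + Complex.normSq (x (.inr i))) := by
  simp [dotProduct, Fintype.sum_sum_type, Complex.re_sum, Finset.sum_add_distrib,
    Complex.normSq_apply, mul_comm]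

variable [DecidableEq m]

lemma numericalRange_unitary_conj_subset (G : Matrix m m ℂ) {U : Matrix m m ℂ}
    (hU : U ∈ unitaryGroup m ℂ) : numericalRange (U * G * star U) ⊆ numericalRange G := by
  intro z hz
  obtain ⟨x, hx, rfl⟩ := mem_numericalRange_iff.mp hz
  have hdot (v w : m → ℂ) : star v ⬝ᵥ U *ᵥ w = star (star U *ᵥ v) ⬝ᵥ w := by
    rw [star_mulVec, dotProduct_mulVec, star_eq_conjTranspose, conjTranspose_conjTranspose]
  refine mem_numericalRange_iff.mpr ⟨star U *ᵥ x, ?_, ?_⟩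
  · rw [← hdot, mulVec_mulVec, (mem_unitaryGroup_iff).mp hU, one_mulVec, hx]
  · rw [← mulVec_mulVec, ← mulVec_mulVec, hdot]

lemma numericalRange_unitary_conj (G : Matrix m m ℂ) {U : Matrix m m ℂ}
    (hU : U ∈ unitaryGroup m ℂ) : numericalRange (U * G * star U) = numericalRange G := by
  refine (numericalRange_unitary_conj_subset G hU).antisymm ?_
  have hUU : star U * U = 1 := (mem_unitaryGroup_iff').mp hU
  have hG : star U * (U * G * star U) * star (star U) = G := by
    rw [star_star, ← mul_assoc, ← mul_assoc, hUU, one_mul, mul_assoc, hUU, mul_one]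
  simpa only [hG] using numericalRange_unitary_conj_subset (U * G * star U) (Unitary.star_mem hU)

/-- Up to a permutation of the basis, the direct sum of the real `2 × 2` matrices
`!![a i, b i; c i, d i]`. -/
def fromBlocksDiagonal (a b c d : m → ℝ) : Matrix (m ⊕ m) (m ⊕ m) ℂ :=
  fromBlocks (diagonal fun i => (a i : ℂ)) (diagonal fun i => (b i : ℂ))
    (diagonal fun i => (c i : ℂ)) (diagonal fun i => (d i : ℂ))

lemma star_dotProduct_fromBlocksDiagonal_mulVec (a b c d : m → ℝ) (x : m ⊕ m → ℂ) :
    star x ⬝ᵥ fromBlocksDiagonal a b c d *ᵥ x =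
      ∑ i, (star (x (.inl i)) * (a i * x (.inl i) + b i * x (.inr i)) +
        star (x (.inr i)) * (c i * x (.inl i) + d i * x (.inr i))) := by
  simp only [fromBlocksDiagonal, dotProduct, Fintype.sum_sum_type, fromBlocks_mulVec,
    Sum.elim_inl, Sum.elim_inr, Pi.star_apply, Pi.add_apply, mulVec_diagonal, Function.comp_def,
    ← Finset.sum_add_distrib]

lemma re_le_of_mem_numericalRange_fromBlocksDiagonal (a b c d : m → ℝ) {ρ : ℝ}
    (hρ : ∀ i, rightmostRe (a i) (b i) (c i) (d i) ≤ ρ) {z : ℂ}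
    (hz : z ∈ numericalRange (fromBlocksDiagonal a b c d)) : z.re ≤ ρ := by
  obtain ⟨x, hx, rfl⟩ := mem_numericalRange_iff.mp hz
  have hx' : ∑ i, (Complex.normSq (x (.inl i)) + Complex.normSq (x (.inr i))) = 1 := by
    rw [← re_star_dotProduct_self_sum, hx, Complex.one_re]
  calc (star x ⬝ᵥ fromBlocksDiagonal a b c d *ᵥ x).re
      ≤ ∑ i, rightmostRe (a i) (b i) (c i) (d i) *
          (Complex.normSq (x (.inl i)) + Complex.normSq (x (.inr i))) := by
        rw [star_dotProduct_fromBlocksDiagonal_mulVec, Complex.re_sum]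
        exact Finset.sum_le_sum fun i _ => re_form_le_rightmostRe_mul _ _ _ _ _ _
    _ ≤ ∑ i, ρ * (Complex.normSq (x (.inl i)) + Complex.normSq (x (.inr i))) :=
        Finset.sum_le_sum fun i _ => mul_le_mul_of_nonneg_right (hρ i)
          (add_nonneg (Complex.normSq_nonneg _) (Complex.normSq_nonneg _))
    _ = ρ := by rw [← Finset.mul_sum, hx', mul_one]

lemma rightmostRe_mem_re_image_numericalRange_fromBlocksDiagonal (a b c d : m → ℝ) (i : m) :
    rightmostRe (a i) (b i) (c i) (d i) ∈
      Complex.re '' numericalRange (fromBlocksDiagonal a b c d) := by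
  obtain ⟨s, t, hst, hform⟩ := exists_quadForm_eq_rightmostRe (a i) (b i) (c i) (d i)
  set x : m ⊕ m → ℂ := Sum.elim (Pi.single i (s : ℂ)) (Pi.single i (t : ℂ))
  refine ⟨_, mem_numericalRange_iff.mpr ⟨x, ?_, rfl⟩, ?_⟩
  · simp only [x, dotProduct, Fintype.sum_sum_type, Sum.elim_inl, Sum.elim_inr, Pi.star_apply,
      Pi.single_apply, RCLike.star_def, mul_ite, mul_zero, Finset.sum_ite_eq', Finset.mem_univ,
      if_true, Complex.conj_ofReal]
    exact_mod_cast (by linear_combination hst : s * s + t * t = 1)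
  · rw [star_dotProduct_fromBlocksDiagonal_mulVec,
      Finset.sum_eq_single i (fun j _ hj => by simp [x, hj]) (by simp), ← hform]
    simp only [x, Sum.elim_inl, Sum.elim_inr, Pi.single_eq_same, Complex.star_def,
      Complex.conj_ofReal]
    norm_cast
    ring

lemma isGreatest_re_numericalRange_fromBlocksDiagonal (a b c d : m → ℝ) {i₀ : m}
    (h : ∀ i, rightmostRe (a i) (b i) (c i) (d i) ≤ rightmostRe (a i₀) (b i₀) (c i₀) (d i₀)) :
    IsGreatest (Complex.re '' numericalRange (fromBlocksDiagonal a b c d))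
      (rightmostRe (a i₀) (b i₀) (c i₀) (d i₀)) :=
  ⟨rightmostRe_mem_re_image_numericalRange_fromBlocksDiagonal a b c d i₀, by
    rintro _ ⟨z, hz, rfl⟩
    exact re_le_of_mem_numericalRange_fromBlocksDiagonal a b c d h hz⟩

end NumericalRange

section Complexification

variable {m : Type*}

lemma map_ofReal_mul [Fintype m] (P Q : Matrix m m ℝ) :
    (P * Q).map ((↑) : ℝ → ℂ) = P.map (↑) * Q.map (↑) :=
  Matrix.map_mul (f := Complex.ofRealHom)

lemma map_ofReal_star (P : Matrix m m ℝ) :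
    (star P).map ((↑) : ℝ → ℂ) = star (P.map (↑)) := by
  ext
  simp [star_eq_conjTranspose]

variable [Fintype m] [DecidableEq m]

lemma map_ofReal_mem_unitaryGroup {U : Matrix m m ℝ} (hU : U ∈ unitaryGroup m ℝ) :
    U.map ((↑) : ℝ → ℂ) ∈ unitaryGroup m ℂ := by
  rw [mem_unitaryGroup_iff', ← map_ofReal_star, ← map_ofReal_mul, (mem_unitaryGroup_iff').mp hU]
  exact Matrix.map_one _ Complex.ofReal_zero Complex.ofReal_one

lemma Matrix.IsHermitian.spectral_theorem_map_ofReal {A : Matrix m m ℝ} (hA : A.IsHermitian) :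
    A.map ((↑) : ℝ → ℂ) = (hA.eigenvectorUnitary : Matrix m m ℝ).map (↑) *
      diagonal (fun i => (hA.eigenvalues i : ℂ)) *
      star ((hA.eigenvectorUnitary : Matrix m m ℝ).map ((↑) : ℝ → ℂ)) := by
  conv_lhs => rw [hA.spectral_theorem, Unitary.conjStarAlgAut_apply]
  rw [map_ofReal_mul, map_ofReal_mul, map_ofReal_star, diagonal_map Complex.ofReal_zero]
  rfl

lemma fromBlocks_mem_unitaryGroup {U : Matrix m m ℂ} (hU : U ∈ unitaryGroup m ℂ) :
    fromBlocks U 0 0 U ∈ unitaryGroup (m ⊕ m) ℂ := by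
  rw [mem_unitaryGroup_iff, star_eq_conjTranspose, fromBlocks_conjTranspose, fromBlocks_multiply,
    ← star_eq_conjTranspose, (mem_unitaryGroup_iff).mp hU]
  simp

lemma fromBlocks_mul_fromBlocks_mul_star (U P Q R S : Matrix m m ℂ) :
    fromBlocks U 0 0 U * fromBlocks P Q R S * star (fromBlocks U 0 0 U) =
      fromBlocks (U * P * star U) (U * Q * star U) (U * R * star U) (U * S * star U) := by
  simp [star_eq_conjTranspose, fromBlocks_conjTranspose, fromBlocks_multiply, mul_assoc]

end Complexification

theorem max_re_numericalRange_nesterov_general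
    (n : ℕ) (A : Matrix (Fin n) (Fin n) ℝ) (hA : A.IsHermitian)
    (μ L : ℝ) (hμL : μ < L)
    (β lamn : ℝ)
    (hβ : β = (Real.sqrt L - Real.sqrt μ) / (Real.sqrt L + Real.sqrt μ))
    (heigpos : ∀ i, 0 < hA.eigenvalues i)
    (heigle : ∀ i, hA.eigenvalues i ≤ lamn)
    (heigmax : ∃ i, hA.eigenvalues i = lamn) :
    IsGreatest
      ((fun z : ℂ => z.re) ''
        numericalRange
          (Matrix.fromBlocks (0 : Matrix (Fin n) (Fin n) ℂ) (A.map Complex.ofReal)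
            ((-β : ℂ) • (1 : Matrix (Fin n) (Fin n) ℂ))
            (((1 : ℂ) + β) • A.map Complex.ofReal)))
      ((1 / 2) * ((1 + β) * lamn +
        Real.sqrt (lamn ^ 2 * (1 + β) ^ 2 + (lamn - β) ^ 2))) := by
  have hβ0 : 0 ≤ β := hβ ▸ div_nonneg (sub_nonneg.2 (Real.sqrt_le_sqrt hμL.le)) (by positivity)
  obtain ⟨i₀, rfl⟩ := heigmax
  set ev := hA.eigenvalues
  set U := (hA.eigenvectorUnitary : Matrix (Fin n) (Fin n) ℝ).map ((↑) : ℝ → ℂ)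
  have hU : U ∈ unitaryGroup (Fin n) ℂ := map_ofReal_mem_unitaryGroup hA.eigenvectorUnitary.2
  have hG : fromBlocks 0 (A.map (↑)) ((-β : ℂ) • 1) (((1 : ℂ) + β) • A.map (↑)) =
      fromBlocks U 0 0 U * fromBlocksDiagonal (fun _ => 0) ev (fun _ => -β)
        (fun i => (1 + β) * ev i) * star (fromBlocks U 0 0 U) := by
    rw [fromBlocksDiagonal, fromBlocks_mul_fromBlocks_mul_star, hA.spectral_theorem_map_ofReal]
    congr 1
    · simp
    · rw [← smul_one_eq_diagonal, mul_smul_comm, smul_mul_assoc, mul_one,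
        (mem_unitaryGroup_iff).mp hU]
      simp
    · rw [show (fun i => (((1 + β) * ev i : ℝ) : ℂ)) = ((1 : ℂ) + β) • fun i => (ev i : ℂ) by
        ext; simp, diagonal_smul, mul_smul_comm, smul_mul_assoc]
  have hval : (1 / 2) * ((1 + β) * ev i₀ + √(ev i₀ ^ 2 * (1 + β) ^ 2 + (ev i₀ - β) ^ 2)) =
      rightmostRe 0 (ev i₀) (-β) ((1 + β) * ev i₀) := by
    rw [rightmostRe]
    ring_nf
  rw [hG, numericalRange_unitary_conj _ (fromBlocks_mem_unitaryGroup hU), hval]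
  exact isGreatest_re_numericalRange_fromBlocksDiagonal _ _ _ _ fun i =>
    monotoneOn_rightmostRe_nesterov hβ0 (heigpos i).le (heigpos i₀).le (heigle i)

/-- For the Nesterov operator `G = [[0, A], [-βI, (1+β)A]]`
with `A` symmetric, `0 ≺ A ≺ I`, largest eigenvalue `λ_n = 1 - μ/L` and
`β = (√L - √μ)/(√L + √μ)`, the maximum real value of the numerical range is
`re(G) = ½((1+β)λ_n + √(λ_n²(1+β)² + (λ_n - β)²))`. -/
theorem max_re_numericalRange_nesterov
    (n : ℕ) (A : Matrix (Fin n) (Fin n) ℝ) (hA : A.IsHermitian)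
    (μ L : ℝ) (hμ : 0 < μ) (hμL : μ < L)
    (β lamn : ℝ)
    (hβ : β = (Real.sqrt L - Real.sqrt μ) / (Real.sqrt L + Real.sqrt μ))
    (hlamn : lamn = 1 - μ / L)
    (heigpos : ∀ i, 0 < hA.eigenvalues i)
    (heigle : ∀ i, hA.eigenvalues i ≤ lamn)
    (heigmax : ∃ i, hA.eigenvalues i = lamn) :
    IsGreatest
      ((fun z : ℂ => z.re) ''
        numericalRange
          (Matrix.fromBlocks (0 : Matrix (Fin n) (Fin n) ℂ) (A.map Complex.ofReal)
            ((-β : ℂ) • (1 : Matrix (Fin n) (Fin n) ℂ))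
            (((1 : ℂ) + β) • A.map Complex.ofReal)))
      ((1 / 2) * ((1 + β) * lamn +
        Real.sqrt (lamn ^ 2 * (1 + β) ^ 2 + (lamn - β) ^ 2))) :=
  max_re_numericalRange_nesterov_general n A hA μ L hμL β lamn hβ heigpos heigle heigmax
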